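/- The chord-based verification is sound: fix \alpha \in (0,1/2). Suppose there exists a finite partition 1/2 = q_0 < q_1 < \dots < q_m = 1 where each [q_{j-1}, q_j] = [k_j/2^{n_j}, (k_j+1)/2^{n_j}] for integers k_j, n_j, and suppose the chord C_j(x) joining (q_{j-1}, T_\alpha(q_{j-1})) and (q_j, T_\alpha(q_j)) satisfies C_j(x) \ge f(x) H(\alpha) for all x \in [q_{j-1}, q_j]. Then T_\alpha(p) \ge f(p) H(\alpha) for all p \in [0,1]. -/

import Mathlib

/-!
Appending an input bit splits the lex function for `2k+1` on `n+1` bits into the lex functions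
for `k` and `k+1` on `n` bits, mixed by the channel, so concavity of `f` gives the midpoint
inequality `(T_α(k/2ⁿ) + T_α((k+1)/2ⁿ))/2 ≤ T_α((2k+1)/2ⁿ⁺¹)`. Iterating it over the dyadic
grid and passing to the limit by continuity, `T_α` lies above its chord on every interval
`[k/2ⁿ, (k+1)/2ⁿ]`, which settles `[1/2, 1]`. Prepending an input bit gives
`2 T_α(p) = T_α(2p) + 2p H(α)`, and since `f(2p) = 2 f(p) - 2p` the bound at `2p` transfers to `p`.
-/

open Finset

/-- `f2 x = -x log₂ x`, the summand of base-2 Shannon entropy. -/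
noncomputable def f2 (x : ℝ) : ℝ := -x * Real.logb 2 x

/-- Binary entropy function `H(α)` (base 2). -/
noncomputable def binEnt (α : ℝ) : ℝ := f2 α + f2 (1 - α)

/-- Joint pmf of `(Xⁿ, Yⁿ)` where `Xⁿ` is i.i.d. Bernoulli(1/2) and
`Yⁿ = Xⁿ ⊕ Zⁿ` with `Zⁿ` i.i.d. Bernoulli(α) (a memoryless BSC(α)). -/
noncomputable def jointP (n : ℕ) (α : ℝ) (x y : Fin n → Bool) : ℝ :=
  (1/2)^n * ∏ i, (if x i = y i then 1 - α else α)

/-- `Pr{b(Xⁿ) = u, Yⁿ = y}`. -/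
noncomputable def pBY (n : ℕ) (α : ℝ) (b : (Fin n → Bool) → Bool) (u : Bool)
    (y : Fin n → Bool) : ℝ :=
  ∑ x : Fin n → Bool, if b x = u then jointP n α x y else 0

/-- `Pr{b(Xⁿ) = u}` for `Xⁿ` uniform on `{0,1}ⁿ`. -/
noncomputable def pB (n : ℕ) (b : (Fin n → Bool) → Bool) (u : Bool) : ℝ :=
  ∑ x : Fin n → Bool, if b x = u then (1/2)^n else 0

/-- `H(b(Xⁿ))`, the entropy of the Boolean function's output. -/
noncomputable def HB (n : ℕ) (b : (Fin n → Bool) → Bool) : ℝ :=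
  ∑ u : Bool, f2 (pB n b u)

/-- `Pr{b(Xⁿ) = 0 ∣ Yⁿ = y}` (note `Pr{Yⁿ = y} = 2⁻ⁿ` since `Yⁿ` is uniform;
`0` is encoded as `false`). -/
noncomputable def condP (n : ℕ) (α : ℝ) (b : (Fin n → Bool) → Bool)
    (y : Fin n → Bool) : ℝ :=
  (2:ℝ)^n * pBY n α b false y

/-- The conditional entropy `H(b(Xⁿ) ∣ Yⁿ)`. -/
noncomputable def condHB (n : ℕ) (α : ℝ) (b : (Fin n → Bool) → Bool) : ℝ :=
  ∑ y : Fin n → Bool, (1/2)^n * ∑ u : Bool, f2 ((2:ℝ)^n * pBY n α b u y)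

/-- The mutual information `I(b(Xⁿ); Yⁿ) = H(b(Xⁿ)) - H(b(Xⁿ) ∣ Yⁿ)`. -/
noncomputable def MI (n : ℕ) (α : ℝ) (b : (Fin n → Bool) → Bool) : ℝ :=
  HB n b - condHB n α b

/-- The numeric value of `x ∈ {0,1}ⁿ` with the first coordinate most significant;
`x ≺_L x'` in the lexicographic order iff `vecVal x < vecVal x'`. -/
def vecVal {n : ℕ} (x : Fin n → Bool) : ℕ :=
  ∑ i : Fin n, if x i then 2 ^ (n - 1 - i.val) else 0

/-- The unique lex Boolean function on `n` inputs whose preimage of `0` (= `false`)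
is the initial segment of size `k` of the lexicographic order on `{0,1}ⁿ`. -/
def lexFun (n k : ℕ) : (Fin n → Bool) → Bool := fun x => decide (k ≤ vecVal x)

/-- `T_α` at the dyadic rational `k/2ⁿ`:
`T_α(k/2ⁿ) = E_{Yⁿ} f(Pr{b(Xⁿ)=0 ∣ Yⁿ})` where `b` is the lex function on `n`
inputs with `Pr{b(Xⁿ)=0} = k/2ⁿ`. -/
noncomputable def Tdy (α : ℝ) (n k : ℕ) : ℝ :=
  ∑ y : Fin n → Bool, (1/2)^n * f2 (condP n α (lexFun n k) y)

open Filter Topology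

lemma f2_eq_smul_negMulLog : f2 = (Real.log 2)⁻¹ • Real.negMulLog := by
  ext x
  simp only [f2, Real.negMulLog, Real.logb, Pi.smul_apply, smul_eq_mul]
  ring

lemma concaveOn_f2 : ConcaveOn ℝ (Set.Ici 0) f2 := by
  rw [f2_eq_smul_negMulLog]
  exact Real.concaveOn_negMulLog.smul (by positivity)

lemma f2_mul (x y : ℝ) : f2 (x * y) = x * f2 y + y * f2 x := by
  simp only [f2_eq_smul_negMulLog, Pi.smul_apply, smul_eq_mul, Real.negMulLog_mul]
  ring

lemma f2_two_mul (x : ℝ) : f2 (2 * x) = 2 * f2 x - 2 * x := by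
  have h2 : f2 2 = -2 := by simp [f2]
  rw [f2_mul, h2]
  ring

lemma f2_add_f2_le {a b α : ℝ} (ha : 0 ≤ a) (hb : 0 ≤ b) (hα₀ : 0 ≤ α) (hα₁ : α ≤ 1) :
    f2 a + f2 b ≤ f2 ((1 - α) * a + α * b) + f2 (α * a + (1 - α) * b) := by
  have h₁ := concaveOn_f2.2 (Set.mem_Ici.2 ha) (Set.mem_Ici.2 hb) (sub_nonneg.2 hα₁) hα₀
    (sub_add_cancel 1 α)
  have h₂ := concaveOn_f2.2 (Set.mem_Ici.2 ha) (Set.mem_Ici.2 hb) hα₀ (sub_nonneg.2 hα₁)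
    (add_sub_cancel α 1)
  simp only [smul_eq_mul] at h₁ h₂
  linarith

section Tuples

variable {n : ℕ}

lemma sum_fun_snoc {β M : Type*} [Fintype β] [AddCommMonoid M] (F : (Fin (n + 1) → β) → M) :
    ∑ z, F z = ∑ b, ∑ x, F (Fin.snoc x b) := by
  rw [← (Fin.snocEquiv fun _ => β).sum_comp, Fintype.sum_prod_type]
  rfl

lemma sum_fun_cons {β M : Type*} [Fintype β] [AddCommMonoid M] (F : (Fin (n + 1) → β) → M) :
    ∑ z, F z = ∑ b, ∑ x, F (Fin.cons b x) := by
  rw [← (Fin.consEquiv fun _ => β).sum_comp, Fintype.sum_prod_type]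
  rfl

end Tuples

noncomputable def bscTrans (n : ℕ) (α : ℝ) (x y : Fin n → Bool) : ℝ :=
  ∏ i, if x i = y i then 1 - α else α

section Channel

variable {n : ℕ} {α : ℝ}

lemma bscTrans_nonneg (hα₀ : 0 ≤ α) (hα₁ : α ≤ 1) (x y : Fin n → Bool) :
    0 ≤ bscTrans n α x y :=
  Finset.prod_nonneg fun i _ => by split <;> linarith

lemma bscTrans_snoc (x y : Fin n → Bool) (b c : Bool) :
    bscTrans (n + 1) α (Fin.snoc x b) (Fin.snoc y c) =
      (if b = c then 1 - α else α) * bscTrans n α x y := by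
  simp only [bscTrans, Fin.prod_univ_castSucc, Fin.snoc_castSucc, Fin.snoc_last]
  ring

lemma bscTrans_cons (x y : Fin n → Bool) (b c : Bool) :
    bscTrans (n + 1) α (Fin.cons b x) (Fin.cons c y) =
      (if b = c then 1 - α else α) * bscTrans n α x y := by
  simp only [bscTrans, Fin.prod_univ_succ, Fin.cons_zero, Fin.cons_succ]

lemma sum_bscTrans (x : Fin n → Bool) : ∑ y, bscTrans n α x y = 1 := by
  simp only [bscTrans]
  rw [← Fintype.prod_sum (fun i c => if x i = c then 1 - α else α)]
  refine Finset.prod_eq_one fun i _ => ?_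
  cases x i <;> simp

lemma condP_eq_sum (b : (Fin n → Bool) → Bool) (y : Fin n → Bool) :
    condP n α b y = ∑ x, if b x = false then bscTrans n α x y else 0 := by
  rw [condP, pBY, Finset.mul_sum]
  refine Finset.sum_congr rfl fun x _ => ?_
  simp only [jointP, bscTrans, mul_ite, mul_zero, ← mul_assoc, ← mul_pow]
  norm_num

lemma condP_nonneg (hα₀ : 0 ≤ α) (hα₁ : α ≤ 1) (b : (Fin n → Bool) → Bool)
    (y : Fin n → Bool) : 0 ≤ condP n α b y := by
  rw [condP_eq_sum]
  exact Finset.sum_nonneg fun x _ => by split <;> simp [bscTrans_nonneg hα₀ hα₁]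

lemma sum_condP (b : (Fin n → Bool) → Bool) :
    ∑ y, condP n α b y = #{x | b x = false} := by
  simp only [condP_eq_sum]
  rw [Finset.sum_comm, ← Finset.sum_boole]
  refine Finset.sum_congr rfl fun x _ => ?_
  split_ifs <;> simp [sum_bscTrans]

lemma condP_snoc (b : (Fin (n + 1) → Bool) → Bool) (y : Fin n → Bool) (c : Bool) :
    condP (n + 1) α b (Fin.snoc y c) =
      ∑ u, (if u = c then 1 - α else α) * condP n α (fun x => b (Fin.snoc x u)) y := by
  rw [condP_eq_sum, sum_fun_snoc]
  refine Finset.sum_congr rfl fun u _ => ?_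
  rw [condP_eq_sum, Finset.mul_sum]
  refine Finset.sum_congr rfl fun x _ => ?_
  rw [bscTrans_snoc, mul_ite, mul_zero]

lemma condP_cons (b : (Fin (n + 1) → Bool) → Bool) (y : Fin n → Bool) (c : Bool) :
    condP (n + 1) α b (Fin.cons c y) =
      ∑ u, (if u = c then 1 - α else α) * condP n α (fun x => b (Fin.cons u x)) y := by
  rw [condP_eq_sum, sum_fun_cons]
  refine Finset.sum_congr rfl fun u _ => ?_
  rw [condP_eq_sum, Finset.mul_sum]
  refine Finset.sum_congr rfl fun x _ => ?_
  rw [bscTrans_cons, mul_ite, mul_zero]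

end Channel

section Lex

variable {n : ℕ}

/-- Binary expansion, most significant digit first. -/
noncomputable def binaryDigitsEquiv (n : ℕ) : (Fin n → Bool) ≃ Fin (2 ^ n) :=
  (Equiv.arrowCongr Fin.revPerm finTwoEquiv.symm).trans finFunctionFinEquiv

lemma binaryDigitsEquiv_val (x : Fin n → Bool) : (binaryDigitsEquiv n x : ℕ) = vecVal x := by
  simp only [binaryDigitsEquiv, Equiv.trans_apply, finFunctionFinEquiv_apply]
  refine (Fintype.sum_equiv Fin.revPerm _ _ fun i => ?_).symm
  rcases hxi : x i with _ | _
  · simp [finTwoEquiv, hxi]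
  · simp [finTwoEquiv, hxi]; omega

lemma card_vecVal_lt {k : ℕ} (hk : k ≤ 2 ^ n) : #{x : Fin n → Bool | vecVal x < k} = k := by
  rw [Finset.card_equiv (binaryDigitsEquiv n) (t := {j : Fin (2 ^ n) | j < k})
    (fun x => by simp [binaryDigitsEquiv_val]), Fin.card_filter_val_lt, min_eq_right hk]

lemma vecVal_snoc (x : Fin n → Bool) (b : Bool) :
    vecVal (Fin.snoc x b : Fin (n + 1) → Bool) = 2 * vecVal x + (if b then 1 else 0) := by
  simp only [vecVal, Fin.sum_univ_castSucc, Fin.snoc_castSucc, Fin.snoc_last, Finset.mul_sum]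
  congr 1
  · refine Finset.sum_congr rfl fun i _ => ?_
    have h : n + 1 - 1 - (i.castSucc : ℕ) = (n - 1 - i) + 1 := by
      simp only [Fin.val_castSucc]; omega
    rw [h]
    cases x i <;> simp [pow_succ, mul_comm]
  · simp

lemma vecVal_cons (x : Fin n → Bool) (b : Bool) :
    vecVal (Fin.cons b x : Fin (n + 1) → Bool) = (if b then 2 ^ n else 0) + vecVal x := by
  simp only [vecVal, Fin.sum_univ_succ, Fin.cons_zero, Fin.cons_succ, Fin.val_zero, Fin.val_succ]
  congr 2 with i
  congr 2
  omega

lemma lexFun_snoc (k : ℕ) (x : Fin n → Bool) (b : Bool) :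
    lexFun (n + 1) (2 * k + 1) (Fin.snoc x b) = lexFun n (if b then k else k + 1) x := by
  simp only [lexFun, vecVal_snoc]
  cases b <;> simp

lemma lexFun_cons {k : ℕ} (hk : k ≤ 2 ^ n) (x : Fin n → Bool) (b : Bool) :
    lexFun (n + 1) k (Fin.cons b x) = (b || lexFun n k x) := by
  simp only [lexFun, vecVal_cons]
  cases b
  · simp
  · simp; omega

end Lex

section LexChannel

variable {n : ℕ} {α : ℝ}

lemma condP_lexFun_snoc (k : ℕ) (y : Fin n → Bool) (c : Bool) :
    condP (n + 1) α (lexFun (n + 1) (2 * k + 1)) (Fin.snoc y c) =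
      (if true = c then 1 - α else α) * condP n α (lexFun n k) y +
        (if false = c then 1 - α else α) * condP n α (lexFun n (k + 1)) y := by
  simp only [condP_snoc, Fintype.sum_bool, lexFun_snoc, if_true, Bool.false_eq_true, if_false]

lemma condP_lexFun_cons {k : ℕ} (hk : k ≤ 2 ^ n) (y : Fin n → Bool) (c : Bool) :
    condP (n + 1) α (lexFun (n + 1) k) (Fin.cons c y) =
      (if false = c then 1 - α else α) * condP n α (lexFun n k) y := by
  simp only [condP_cons, Fintype.sum_bool, lexFun_cons hk, Bool.true_or, Bool.false_or]
  simp [condP_eq_sum]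

lemma sum_condP_lexFun {k : ℕ} (hk : k ≤ 2 ^ n) : ∑ y, condP n α (lexFun n k) y = k := by
  simp [sum_condP, lexFun, card_vecVal_lt hk]

lemma Tdy_midpoint_le (hα₀ : 0 ≤ α) (hα₁ : α ≤ 1) (k : ℕ) :
    (Tdy α n k + Tdy α n (k + 1)) / 2 ≤ Tdy α (n + 1) (2 * k + 1) := by
  simp only [Tdy]
  rw [sum_fun_snoc (n := n), Fintype.sum_bool, ← Finset.sum_add_distrib,
    ← Finset.sum_add_distrib, Finset.sum_div]
  refine Finset.sum_le_sum fun y _ => ?_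
  have h := f2_add_f2_le (condP_nonneg hα₀ hα₁ (lexFun n k) y)
    (condP_nonneg hα₀ hα₁ (lexFun n (k + 1)) y) hα₀ hα₁
  simp only [condP_lexFun_snoc, if_true, Bool.false_eq_true, Bool.true_eq_false, if_false,
    pow_succ]
  have := mul_le_mul_of_nonneg_left h (by positivity : (0 : ℝ) ≤ (1 / 2) ^ n)
  linarith

lemma Tdy_succ {k : ℕ} (hk : k ≤ 2 ^ n) :
    Tdy α (n + 1) k = Tdy α n k / 2 + k / 2 ^ (n + 1) * binEnt α := by
  calc Tdy α (n + 1) k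
      = ∑ y, ((1 / 2) ^ n * f2 (condP n α (lexFun n k) y) / 2 +
          condP n α (lexFun n k) y / 2 ^ (n + 1) * binEnt α) := by
        rw [Tdy, sum_fun_cons (n := n), Fintype.sum_bool, ← Finset.sum_add_distrib]
        refine Finset.sum_congr rfl fun y _ => ?_
        simp only [condP_lexFun_cons hk, f2_mul, binEnt, Bool.false_eq_true, if_false, if_true,
          one_div, inv_pow]
        field_simp
        ring
    _ = Tdy α n k / 2 + k / 2 ^ (n + 1) * binEnt α := by
        rw [Finset.sum_add_distrib, ← Finset.sum_div, ← Finset.sum_mul, ← Finset.sum_div,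
          sum_condP_lexFun hk, Tdy]

end LexChannel

noncomputable def dyadic (n k : ℕ) : ℝ := k / 2 ^ n

lemma dyadic_succ_two_mul (n k : ℕ) : dyadic (n + 1) (2 * k) = dyadic n k := by
  simp only [dyadic, pow_succ]
  push_cast
  field_simp

lemma two_mul_dyadic_succ (n k : ℕ) : 2 * dyadic (n + 1) k = dyadic n k := by
  simp only [dyadic, pow_succ]
  field_simp

lemma dyadic_succ_two_mul_add_one (n k : ℕ) :
    dyadic (n + 1) (2 * k + 1) = (dyadic n k + dyadic n (k + 1)) / 2 := by
  simp only [dyadic, pow_succ]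
  push_cast
  field_simp
  ring

lemma dyadic_nonneg (n k : ℕ) : 0 ≤ dyadic n k := by
  unfold dyadic; positivity

lemma dyadic_le_one_iff {n k : ℕ} : dyadic n k ≤ 1 ↔ k ≤ 2 ^ n := by
  rw [dyadic, div_le_one (by positivity)]
  exact_mod_cast Iff.rfl

lemma floor_mul_two_pow_mem_Icc {x : ℝ} {n i j : ℕ}
    (hx : x ∈ Set.Icc (dyadic n i) (dyadic n j)) (s : ℕ) :
    ⌊x * 2 ^ (n + s)⌋₊ ∈ Set.Icc (i * 2 ^ s) (j * 2 ^ s) := by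
  have hscale : ∀ l : ℕ, dyadic n l * 2 ^ (n + s) = (l * 2 ^ s : ℕ) := fun l => by
    rw [dyadic, pow_add]; push_cast; field_simp
  refine ⟨Nat.le_floor ?_, Nat.floor_le_of_le ?_⟩
  · rw [← hscale]
    gcongr
    exact hx.1
  · rw [← hscale]
    gcongr
    exact hx.2

lemma tendsto_dyadic_floor {x : ℝ} (hx : 0 ≤ x) :
    Tendsto (fun t => dyadic t ⌊x * 2 ^ t⌋₊) atTop (𝓝[Set.Icc 0 x] x) := by
  refine tendsto_nhdsWithin_iff.2 ⟨(tendsto_nat_floor_mul_div_atTop hx).comp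
    (tendsto_pow_atTop_atTop_of_one_lt one_lt_two), Eventually.of_forall fun t => ?_⟩
  refine ⟨dyadic_nonneg _ _, ?_⟩
  rw [dyadic, div_le_iff₀ (by positivity)]
  exact Nat.floor_le (by positivity)

def DyadicPseudoConcave (g : ℝ → ℝ) : Prop :=
  ∀ n k : ℕ, k + 1 ≤ 2 ^ n →
    (g (dyadic n k) + g (dyadic n (k + 1))) / 2 ≤ g (dyadic (n + 1) (2 * k + 1))

section DyadicPseudoConcave

variable {g : ℝ → ℝ}

lemma affine_le_at_dyadic_of_dyadicPseudoConcave (hg : DyadicPseudoConcave g) {a b : ℝ}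
    {n k : ℕ} (hk : k + 1 ≤ 2 ^ n) (h₀ : a + b * dyadic n k ≤ g (dyadic n k))
    (h₁ : a + b * dyadic n (k + 1) ≤ g (dyadic n (k + 1))) :
    ∀ t i, k * 2 ^ t ≤ i → i ≤ (k + 1) * 2 ^ t →
      a + b * dyadic (n + t) i ≤ g (dyadic (n + t) i) := by
  intro t
  induction t with
  | zero =>
    intro i hi₀ hi₁
    obtain rfl | rfl : i = k ∨ i = k + 1 := by simp only [pow_zero, mul_one] at hi₀ hi₁; omega
    exacts [h₀, h₁]
  | succ t ih =>
    intro i hi₀ hi₁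
    have hB : (k + 1) * 2 ^ t ≤ 2 ^ (n + t) := by
      rw [pow_add]; exact Nat.mul_le_mul_right _ hk
    rw [pow_succ] at hi₀ hi₁
    rw [← add_assoc]
    obtain ⟨r, rfl | rfl⟩ := Nat.even_or_odd' i
    · rw [dyadic_succ_two_mul]
      exact ih r (by linarith) (by linarith)
    · have hl := ih r (by linarith) (by linarith)
      have hr := ih (r + 1) (by linarith) (by linarith)
      have hm := hg (n + t) r (by linarith)
      rw [dyadic_succ_two_mul_add_one] at hm ⊢
      linarith

theorem affine_le_of_dyadicPseudoConcave (hc : ContinuousOn g (Set.Icc 0 1))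
    (hg : DyadicPseudoConcave g) {a b : ℝ} {n k : ℕ} (hk : k + 1 ≤ 2 ^ n)
    (h₀ : a + b * dyadic n k ≤ g (dyadic n k))
    (h₁ : a + b * dyadic n (k + 1) ≤ g (dyadic n (k + 1)))
    {x : ℝ} (hx : x ∈ Set.Icc (dyadic n k) (dyadic n (k + 1))) : a + b * x ≤ g x := by
  have hx₀ : 0 ≤ x := (dyadic_nonneg n k).trans hx.1
  have hx₁ : x ≤ 1 := hx.2.trans (dyadic_le_one_iff.2 hk)
  have hlim := tendsto_dyadic_floor hx₀
  refine le_of_tendsto_of_tendsto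
    ((continuous_const.add (continuous_const.mul continuous_id)).tendsto x
      |>.comp (tendsto_nhdsWithin_iff.1 hlim).1)
    (((hc x ⟨hx₀, hx₁⟩).mono (Set.Icc_subset_Icc le_rfl hx₁)).tendsto.comp hlim)
    (eventually_atTop.2 ⟨n, fun t ht => ?_⟩)
  obtain ⟨s, rfl⟩ := Nat.exists_eq_add_of_le ht
  obtain ⟨hi₀, hi₁⟩ := floor_mul_two_pow_mem_Icc hx s
  exact affine_le_at_dyadic_of_dyadicPseudoConcave hg hk h₀ h₁ s _ hi₀ hi₁

theorem chord_le_of_dyadicPseudoConcave (hc : ContinuousOn g (Set.Icc 0 1))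
    (hg : DyadicPseudoConcave g) {n k : ℕ} (hk : k + 1 ≤ 2 ^ n) {x : ℝ}
    (hx : x ∈ Set.Icc (dyadic n k) (dyadic n (k + 1))) :
    g (dyadic n k) + (g (dyadic n (k + 1)) - g (dyadic n k)) /
      (dyadic n (k + 1) - dyadic n k) * (x - dyadic n k) ≤ g x := by
  set c := (g (dyadic n (k + 1)) - g (dyadic n k)) / (dyadic n (k + 1) - dyadic n k)
  have hlen : dyadic n (k + 1) - dyadic n k ≠ 0 := by
    simp only [dyadic]; push_cast; field_simp; norm_num
  have hc₁ := div_mul_cancel₀ (g (dyadic n (k + 1)) - g (dyadic n k)) hlen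
  have h := affine_le_of_dyadicPseudoConcave hc hg hk (a := g (dyadic n k) - c * dyadic n k)
    (b := c) (by linarith) (by linarith) hx
  linarith

theorem eq_half_add_of_dyadic (hc : ContinuousOn g (Set.Icc 0 1)) {c : ℝ}
    (hhalf : ∀ n k, k ≤ 2 ^ n →
      g (dyadic (n + 1) k) = g (dyadic n k) / 2 + dyadic (n + 1) k * c)
    {x : ℝ} (hx : x ∈ Set.Icc 0 (1 / 2)) : g x = g (2 * x) / 2 + x * c := by
  have hx₁ : x ≤ 1 := hx.2.trans (by norm_num)
  have hlim := tendsto_dyadic_floor hx.1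
  have hrhs : ContinuousWithinAt (fun y => g (2 * y) / 2 + y * c) (Set.Icc 0 x) x := by
    refine (((hc (2 * x) ⟨by linarith [hx.1], by linarith [hx.2]⟩).comp
      (continuous_const.mul continuous_id).continuousWithinAt ?_).div_const 2).add
      (continuousWithinAt_id.mul continuousWithinAt_const)
    exact fun y hy => ⟨by linarith [hy.1], by linarith [hy.2, hx.2]⟩
  refine tendsto_nhds_unique_of_eventuallyEq
    (((hc x ⟨hx.1, hx₁⟩).mono (Set.Icc_subset_Icc le_rfl hx₁)).tendsto.comp hlim)
    (hrhs.tendsto.comp hlim) (eventually_atTop.2 ⟨1, fun t ht => ?_⟩)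
  obtain ⟨m, rfl⟩ := Nat.exists_eq_add_of_le ht
  have hk := (floor_mul_two_pow_mem_Icc (n := 1) (i := 0) (j := 1)
    (by simpa [dyadic] using hx) m).2
  rw [add_comm 1 m, one_mul] at hk
  simp only [Function.comp_apply, add_comm 1 m, two_mul_dyadic_succ]
  exact hhalf m _ hk

end DyadicPseudoConcave

lemma forall_mem_Ioc_of_halving {P : ℝ → Prop} (hbase : ∀ x ∈ Set.Icc (1 / 2 : ℝ) 1, P x)
    (hstep : ∀ x ∈ Set.Ioo (0 : ℝ) (1 / 2), P (2 * x) → P x) :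
    ∀ x ∈ Set.Ioc (0 : ℝ) 1, P x := by
  suffices h : ∀ r : ℕ, ∀ x ∈ Set.Ioc (0 : ℝ) 1, 1 / 2 ≤ 2 ^ r * x → P x by
    intro x hx
    obtain ⟨r, hr⟩ := pow_unbounded_of_one_lt (1 / 2 / x) one_lt_two
    exact h r x hx ((div_lt_iff₀ hx.1).1 hr).le
  intro r
  induction r with
  | zero => exact fun x hx h => hbase x ⟨by simpa using h, hx.2⟩
  | succ r ih =>
    intro x hx h
    by_cases hx₂ : 1 / 2 ≤ x
    · exact hbase x ⟨hx₂, hx.2⟩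
    · refine hstep x ⟨hx.1, not_le.1 hx₂⟩ (ih (2 * x) ⟨by linarith [hx.1], by linarith⟩ ?_)
      rwa [← mul_assoc, ← pow_succ]

lemma exists_mem_Icc_succ_of_mem_Icc {β : Type*} [LinearOrder β] {q : ℕ → β} {m : ℕ}
    (hm : 0 < m) {x : β}
    (hx : x ∈ Set.Icc (q 0) (q m)) : ∃ j < m, x ∈ Set.Icc (q j) (q (j + 1)) := by
  induction m with
  | zero => omega
  | succ m ih =>
    by_cases h : x ≤ q m
    · rcases Nat.eq_zero_or_pos m with rfl | hm'
      · exact ⟨0, hm, hx⟩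
      · obtain ⟨j, hj, hxj⟩ := ih hm' ⟨hx.1, h⟩
        exact ⟨j, by omega, hxj⟩
    · exact ⟨m, by omega, (not_le.1 h).le, hx.2⟩

theorem le_of_dyadic_partition_chord_ge {g φ : ℝ → ℝ} (hc : ContinuousOn g (Set.Icc 0 1))
    (hg : DyadicPseudoConcave g) {m : ℕ} (hm : 0 < m) {q : ℕ → ℝ} (hqm : q m ≤ 1)
    (hmono : ∀ j < m, q j ≤ q (j + 1))
    (hdyadic : ∀ j < m, ∃ k n : ℕ, q j = dyadic n k ∧ q (j + 1) = dyadic n (k + 1))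
    (hchord : ∀ j < m, ∀ x ∈ Set.Icc (q j) (q (j + 1)),
      φ x ≤ g (q j) + (g (q (j + 1)) - g (q j)) / (q (j + 1) - q j) * (x - q j)) :
    ∀ x ∈ Set.Icc (q 0) (q m), φ x ≤ g x := by
  intro x hx
  obtain ⟨j, hj, hxj⟩ := exists_mem_Icc_succ_of_mem_Icc hm hx
  obtain ⟨k, n, hqj, hqj1⟩ := hdyadic j hj
  have hk : k + 1 ≤ 2 ^ n := by
    rw [← dyadic_le_one_iff, ← hqj1]
    refine le_trans ?_ hqm
    refine monotoneOn_of_le_succ Set.ordConnected_Iic (fun i _ _ hi => ?_)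
      (Set.mem_Iic.2 hj) Set.self_mem_Iic hj
    rw [Order.succ_eq_add_one] at hi ⊢
    exact hmono i hi
  have hφ := hchord j hj x hxj
  rw [hqj, hqj1] at hxj hφ
  exact hφ.trans (chord_le_of_dyadicPseudoConcave hc hg hk hxj)

theorem f2_mul_le_of_halving {g : ℝ → ℝ} {c : ℝ}
    (hhalf : ∀ x ∈ Set.Icc (0 : ℝ) (1 / 2), g x = g (2 * x) / 2 + x * c)
    (hupper : ∀ x ∈ Set.Icc (1 / 2 : ℝ) 1, f2 x * c ≤ g x) :
    ∀ x ∈ Set.Icc (0 : ℝ) 1, f2 x * c ≤ g x := by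
  intro x hx
  rcases hx.1.eq_or_lt with rfl | hx₀
  · have h0 := hhalf 0 ⟨le_rfl, by norm_num⟩
    simp only [mul_zero, zero_mul, add_zero] at h0
    simp only [f2, neg_zero, zero_mul]
    linarith
  · refine forall_mem_Ioc_of_halving hupper (fun y hy h2y => ?_) x ⟨hx₀, hx.2⟩
    rw [f2_two_mul] at h2y
    rw [hhalf y ⟨hy.1.le, hy.2.le⟩]
    linarith

/-- Soundness of the chord-based verification: fix `α ∈ (0,1/2)` and let `T_α` be
the continuous extension of the dyadic values. If there is a partition
`1/2 = q₀ < q₁ < ⋯ < q_m = 1` where each `[q_{j}, q_{j+1}] = [k/2ᵐ, (k+1)/2ᵐ]` for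
some integers, and each chord joining `(q_j, T_α(q_j))` and `(q_{j+1}, T_α(q_{j+1}))`
dominates `f(x)H(α)` on `[q_j, q_{j+1}]`, then `T_α(p) ≥ f(p)H(α)` on all of
`[0,1]`. -/
theorem chord_verification_sound (α : ℝ) (hα : α ∈ Set.Ioo (0:ℝ) (1/2))
    (Tα : ℝ → ℝ)
    (hcont : ContinuousOn Tα (Set.Icc 0 1))
    (hdy : ∀ n k : ℕ, k ≤ 2^n → Tα ((k:ℝ)/2^n) = Tdy α n k)
    (m : ℕ) (hm : 0 < m) (q : ℕ → ℝ) (hq0 : q 0 = 1/2) (hqm : q m = 1)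
    (hmono : ∀ j < m, q j < q (j+1))
    (hdyadic : ∀ j < m, ∃ kj nj : ℕ,
      q j = (kj:ℝ)/2^nj ∧ q (j+1) = ((kj:ℝ)+1)/2^nj)
    (hchord : ∀ j < m, ∀ x ∈ Set.Icc (q j) (q (j+1)),
      Tα (q j) + (Tα (q (j+1)) - Tα (q j)) / (q (j+1) - q j) * (x - q j) ≥
        f2 x * binEnt α) :
    ∀ p ∈ Set.Icc (0:ℝ) 1, Tα p ≥ f2 p * binEnt α := by
  have hα₀ : 0 ≤ α := hα.1.le
  have hα₁ : α ≤ 1 := by linarith [hα.2]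
  have hT : ∀ n k, k ≤ 2 ^ n → Tα (dyadic n k) = Tdy α n k := hdy
  have hpc : DyadicPseudoConcave Tα := fun n k hk => by
    rw [hT n k (by omega), hT n (k + 1) hk, hT (n + 1) (2 * k + 1) (by rw [pow_succ]; omega)]
    exact Tdy_midpoint_le hα₀ hα₁ k
  have hhalf : ∀ x ∈ Set.Icc (0 : ℝ) (1 / 2), Tα x = Tα (2 * x) / 2 + x * binEnt α :=
    fun x hx => eq_half_add_of_dyadic hcont (fun n k hk => by
      rw [hT (n + 1) k (by rw [pow_succ]; omega), hT n k hk]; exact Tdy_succ hk) hx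
  have hupper := le_of_dyadic_partition_chord_ge hcont hpc hm hqm.le (fun j hj => (hmono j hj).le)
    (fun j hj => by
      obtain ⟨k, n, hqj, hqj1⟩ := hdyadic j hj
      exact ⟨k, n, hqj, by rw [hqj1, dyadic]; push_cast; rfl⟩)
    (fun j hj x hx => hchord j hj x hx)
  rw [hq0, hqm] at hupper
  exact f2_mul_le_of_halving hhalf hupper
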